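/- arXiv:1809.02566 — 3 statements merged into one kernel-verified Lean document; each statement's English description precedes it below -/
import Mathlib

section
/- Let ζ > 0 and λ ∈ ℂ. Then for every t ≥ 0, the function u(t) := E_ζ(λ t^ζ) satisfies the Volterra integral equation u(t) = 1 + λ ∫_0^t g_ζ(t-s) u(s) ds, where g_ζ(s) = s^{ζ-1}/Γ(ζ). -/
/-!
Termwise integration. The Riemann–Liouville integral of order `ζ` sends `t ^ β / Γ(β + 1)` to
`t ^ (β + ζ) / Γ(β + ζ + 1)` (a Beta integral), so it shifts the series
`∑ λ ^ k (t ^ ζ) ^ k / Γ(ζ k + 1)` by one index. Sum and integral commute by dominated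
convergence, with dominating series `g_ζ(t - s) E_ζ(‖λ‖ t ^ ζ)`; the series `∑ x ^ k / Γ(ζ k + c)`
converges for every `x` because `Γ(y) ≥ A ^ (y - 1) e ^ (-(A + 1))` for every `A ≥ 0`.
-/

open Complex Real MeasureTheory Set Filter
open scoped Interval

theorem Real.rpow_sub_one_mul_exp_neg_le_Gamma {A y : ℝ} (hA : 0 ≤ A) (hy : 1 ≤ y) :
    A ^ (y - 1) * Real.exp (-(A + 1)) ≤ Real.Gamma y := by
  have hsub : Ioc A (A + 1) ⊆ Ioi 0 := fun x hx => hA.trans_lt hx.1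
  have hint := Real.GammaIntegral_convergent (zero_lt_one.trans_le hy)
  calc A ^ (y - 1) * Real.exp (-(A + 1))
      = A ^ (y - 1) * Real.exp (-(A + 1)) * volume.real (Ioc A (A + 1)) := by simp
    _ ≤ ∫ x in Ioc A (A + 1), Real.exp (-x) * x ^ (y - 1) := by
      refine setIntegral_ge_of_const_le_real measurableSet_Ioc (by simp) (fun x hx => ?_)
        (hint.mono_set hsub)
      rw [mul_comm]
      gcongr
      exacts [hx.2, hx.1.le]
    _ ≤ ∫ x in Ioi 0, Real.exp (-x) * x ^ (y - 1) :=
      setIntegral_mono_set hint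
        ((ae_restrict_iff' measurableSet_Ioi).mpr (ae_of_all _ fun x hx =>
          (mul_pos (Real.exp_pos _) (Real.rpow_pos_of_pos hx _)).le))
        (ae_of_all _ hsub)
    _ = Real.Gamma y := (Real.Gamma_eq_integral (zero_lt_one.trans_le hy)).symm

theorem summable_pow_div_Gamma_mul_add {ζ : ℝ} (hζ : 0 < ζ) (c x : ℝ) :
    Summable fun k : ℕ => x ^ k / Real.Gamma (ζ * k + c) := by
  set A := (|x| + 1) ^ ζ⁻¹
  have hA : 0 < A := by positivity
  have hAζ : A ^ ζ = |x| + 1 := Real.rpow_inv_rpow (by positivity) hζ.ne'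
  set K := A ^ (c - 1) * Real.exp (-(A + 1))
  have hK : 0 < K := by positivity
  have hr : |x| / (|x| + 1) < 1 := (div_lt_one (by positivity)).mpr (by linarith)
  refine Summable.of_norm_bounded_eventually_nat
    ((summable_geometric_of_lt_one (by positivity) hr).mul_left K⁻¹) ?_
  have hk : ∀ᶠ k : ℕ in atTop, 1 ≤ ζ * k + c :=
    tendsto_natCast_atTop_atTop.const_mul_atTop hζ |>.atTop_add tendsto_const_nhds
      |>.eventually_ge_atTop 1
  filter_upwards [hk] with k hk
  have hGamma : (|x| + 1) ^ k * K ≤ Real.Gamma (ζ * k + c) := by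
    calc (|x| + 1) ^ k * K = A ^ (ζ * k + c - 1) * Real.exp (-(A + 1)) := by
          rw [add_sub_assoc, Real.rpow_add hA, Real.rpow_mul_natCast hA.le, hAζ, mul_assoc]
      _ ≤ _ := Real.rpow_sub_one_mul_exp_neg_le_Gamma hA.le hk
  have hpos : 0 < (|x| + 1) ^ k * K := by positivity
  rw [norm_div, norm_pow, Real.norm_eq_abs, Real.norm_of_nonneg (hpos.trans_le hGamma).le,
    div_pow, div_le_iff₀ (hpos.trans_le hGamma)]
  calc |x| ^ k = K⁻¹ * (|x| ^ k / (|x| + 1) ^ k) * ((|x| + 1) ^ k * K) := by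
        field_simp
    _ ≤ _ := by gcongr

theorem integral_sub_rpow_mul_rpow {α β t : ℝ} (hα : 0 < α) (hβ : 0 < β) (ht : 0 < t) :
    ∫ s in (0:ℝ)..t, (t - s) ^ (α - 1) * s ^ (β - 1) =
      Real.Gamma α * Real.Gamma β / Real.Gamma (α + β) * t ^ (α + β - 1) := by
  have hbeta : Complex.betaIntegral β α =
      Complex.Gamma β * Complex.Gamma α / Complex.Gamma (β + α) := by
    rw [Complex.Gamma_mul_Gamma_eq_betaIntegral (by simpa using hβ) (by simpa using hα),
      mul_div_cancel_left₀ _ (Complex.Gamma_ne_zero_of_re_pos (by simp; linarith))]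
  apply Complex.ofReal_injective
  rw [← intervalIntegral.integral_ofReal]
  calc ∫ s in (0:ℝ)..t, (((t - s) ^ (α - 1) * s ^ (β - 1) : ℝ) : ℂ)
      = ∫ s in (0:ℝ)..t, (s : ℂ) ^ ((β : ℂ) - 1) * ((t : ℂ) - s) ^ ((α : ℂ) - 1) := by
        refine intervalIntegral.integral_congr fun s hs => ?_
        rw [uIcc_of_le ht.le] at hs
        rw [Complex.ofReal_mul, Complex.ofReal_cpow hs.1, Complex.ofReal_cpow (sub_nonneg.2 hs.2)]
        push_cast
        ring
    _ = _ := by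
      rw [Complex.betaIntegral_scaled _ _ ht, hbeta, Complex.ofReal_mul, Complex.ofReal_div,
        Complex.ofReal_mul, Complex.ofReal_cpow ht.le]
      rw [← Complex.ofReal_add, Complex.Gamma_ofReal, Complex.Gamma_ofReal, Complex.Gamma_ofReal,
        add_comm β]
      push_cast
      ring_nf

theorem integral_sub_rpow_div_Gamma_mul_rpow_div_Gamma {ζ β t : ℝ} (hζ : 0 < ζ) (hβ : 0 ≤ β)
    (ht : 0 ≤ t) :
    ∫ s in (0:ℝ)..t, (t - s) ^ (ζ - 1) / Real.Gamma ζ * (s ^ β / Real.Gamma (β + 1)) =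
      t ^ (β + ζ) / Real.Gamma (β + ζ + 1) := by
  rcases ht.eq_or_lt with rfl | ht
  · simp [Real.zero_rpow (by positivity : β + ζ ≠ 0)]
  have hΓζ := (Real.Gamma_pos_of_pos hζ).ne'
  have hΓβ := (Real.Gamma_pos_of_pos (by positivity : 0 < β + 1)).ne'
  have hΓ := (Real.Gamma_pos_of_pos (by positivity : 0 < β + ζ + 1)).ne'
  simp_rw [div_mul_div_comm, div_eq_inv_mul]
  rw [intervalIntegral.integral_const_mul]
  have := integral_sub_rpow_mul_rpow hζ (by positivity : 0 < β + 1) ht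
  rw [add_sub_cancel_right] at this
  rw [this, show ζ + (β + 1) = β + ζ + 1 by ring, show β + ζ + 1 - 1 = β + ζ by ring]
  field_simp

theorem mittagLeffler_summand_eq (ζ s : ℝ) (lam : ℂ) (k : ℕ) :
    (lam * ((s ^ ζ : ℝ) : ℂ)) ^ k / Complex.Gamma (ζ * k + 1) =
      lam ^ k * (((s ^ ζ) ^ k / Real.Gamma (ζ * k + 1) : ℝ) : ℂ) := by
  rw [Complex.ofReal_div, ← Complex.Gamma_ofReal]
  push_cast
  ring

theorem summable_mittagLeffler_series {ζ : ℝ} (hζ : 0 < ζ) (lam : ℂ) (x : ℝ) :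
    Summable fun k : ℕ => lam ^ k * ((x ^ k / Real.Gamma (ζ * k + 1) : ℝ) : ℂ) := by
  refine Summable.of_norm ((summable_pow_div_Gamma_mul_add hζ 1 (‖lam‖ * x)).abs.congr fun k => ?_)
  rw [norm_mul, norm_pow, Complex.norm_real, Real.norm_eq_abs, mul_pow, mul_div_assoc, abs_mul,
    abs_pow, abs_norm]

theorem hasSum_integral_kernel_mul_mittagLeffler {ζ t : ℝ} (hζ : 0 < ζ) (ht : 0 ≤ t) (lam : ℂ) :
    HasSum (fun k : ℕ => lam ^ k * (((t ^ ζ) ^ (k + 1) / Real.Gamma (ζ * ↑(k + 1) + 1) : ℝ) : ℂ))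
      (∫ s in (0:ℝ)..t, (((t - s) ^ (ζ - 1) / Real.Gamma ζ : ℝ) : ℂ) *
        ∑' k : ℕ, lam ^ k * (((s ^ ζ) ^ k / Real.Gamma (ζ * k + 1) : ℝ) : ℂ)) := by
  set g : ℝ → ℝ := fun s => (t - s) ^ (ζ - 1) / Real.Gamma ζ
  set p : ℕ → ℝ → ℝ := fun k s => (s ^ ζ) ^ k / Real.Gamma (ζ * k + 1)
  have hg : IntervalIntegrable g volume 0 t := by
    simpa using ((intervalIntegral.intervalIntegrable_rpow' (a := t) (b := 0)
      (by linarith : -1 < ζ - 1)).comp_sub_left t).div_const (Real.Gamma ζ)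
  have hterm : ∀ k : ℕ, ∫ s in (0:ℝ)..t, (g s : ℂ) * (lam ^ k * (p k s : ℂ)) =
      lam ^ k * (p (k + 1) t : ℂ) := by
    intro k
    have hreal : ∫ s in (0:ℝ)..t, g s * p k s = p (k + 1) t := by
      rw [intervalIntegral.integral_congr (g := fun s => (t - s) ^ (ζ - 1) / Real.Gamma ζ *
          (s ^ (ζ * k) / Real.Gamma (ζ * k + 1))) fun s hs => by
            rw [uIcc_of_le ht] at hs
            simp only [g, p, Real.rpow_mul_natCast hs.1],
        integral_sub_rpow_div_Gamma_mul_rpow_div_Gamma hζ (by positivity) ht]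
      simp only [p, ← Real.rpow_mul_natCast ht]
      push_cast
      ring_nf
    rw [← hreal, ← intervalIntegral.integral_ofReal, ← intervalIntegral.integral_const_mul]
    push_cast
    congr 1
    ext s
    ring
  have hmono : ∀ k : ℕ, ∀ s ∈ Ι 0 t, ‖(g s : ℂ) * (lam ^ k * (p k s : ℂ))‖ ≤
      (‖lam‖ * t ^ ζ) ^ k / Real.Gamma (ζ * k + 1) * g s := by
    intro k s hs
    rw [uIoc_of_le ht] at hs
    have hg0 : 0 ≤ g s := div_nonneg (Real.rpow_nonneg (sub_nonneg.2 hs.2) _)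
      (Real.Gamma_pos_of_pos hζ).le
    have hΓ : 0 < Real.Gamma (ζ * k + 1) := Real.Gamma_pos_of_pos (by positivity)
    have hp0 : 0 ≤ p k s := div_nonneg (pow_nonneg (Real.rpow_nonneg hs.1.le _) _) hΓ.le
    rw [norm_mul, norm_mul, norm_pow, Complex.norm_real, Complex.norm_real,
      Real.norm_of_nonneg hg0, Real.norm_of_nonneg hp0, mul_comm, mul_pow, mul_div_assoc]
    simp only [p]
    gcongr
    exacts [Real.rpow_nonneg hs.1.le _, hs.1.le, hs.2]
  have := intervalIntegral.hasSum_integral_of_dominated_convergence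
    (fun (k : ℕ) s => (‖lam‖ * t ^ ζ) ^ k / Real.Gamma (ζ * k + 1) * g s)
    (fun k => (by fun_prop : Measurable _).aestronglyMeasurable)
    (fun k => ae_of_all _ (hmono k))
    (ae_of_all _ fun s _ => (summable_pow_div_Gamma_mul_add hζ 1 _).mul_right _)
    (by simpa only [tsum_mul_right] using hg.const_mul _)
    (ae_of_all _ fun s _ => ((summable_mittagLeffler_series hζ lam _).hasSum.mul_left _))
  rwa [funext hterm] at this

/-- The Mittag-Leffler function `u(t) = E_ζ(λ t^ζ)` satisfies the Volterra
integral equation `u(t) = 1 + λ ∫_0^t g_ζ(t-s) u(s) ds`, where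
`g_ζ(s) = s^{ζ-1}/Γ(ζ)`. -/
theorem mittagLeffler_volterra (ζ : ℝ) (hζ : 0 < ζ) (lam : ℂ) (t : ℝ) (ht : 0 ≤ t) :
    (fun r : ℝ => ∑' k : ℕ, (lam * (r ^ ζ : ℝ)) ^ k / Complex.Gamma (ζ * k + 1)) t =
      1 + lam * ∫ s in (0:ℝ)..t,
        (((t - s) ^ (ζ - 1) / Real.Gamma ζ : ℝ) : ℂ) *
          (∑' k : ℕ, (lam * (s ^ ζ : ℝ)) ^ k / Complex.Gamma (ζ * k + 1)) := by
  simp only [mittagLeffler_summand_eq]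
  rw [(summable_mittagLeffler_series hζ lam _).tsum_eq_zero_add,
    ← (hasSum_integral_kernel_mul_mittagLeffler hζ ht lam).tsum_eq, ← tsum_mul_left]
  congr 1
  · simp
  · simp only [pow_succ', mul_assoc]
end

section
/- Let ζ ∈ (1,2] and λ ∈ ℂ. Define F_λ(z) := z · E_{ζ,2}(z^ζ λ) for z ∈ ℂ, where E_{ζ,2}(w) = Σ_{k≥0} w^k/Γ(ζk+2). Then for all real t ≥ 0, F_λ'(t) = E_ζ(t^ζ λ), and there exists d_ζ > 0 such that |F_λ(z)| ≤ d_ζ (1+|z|) e^{|z| |λ|^{1/ζ}} for all z ∈ ℂ. -/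
/-!
For `α ≥ 1` and `β ≥ 2` one has `Γ(αk + β) ≥ n!` both for `n = ⌊αk⌋` and for `n = ⌈αk⌉`, and
`k ↦ ⌊αk⌋`, `k ↦ ⌈αk⌉` are injective. Bounding `r^{αk}` by `r^{⌊αk⌋}` when `r ≤ 1` and by
`r^{⌈αk⌉}` when `r > 1`, the series `∑ r^{αk} / Γ(αk + β)` is dominated by a subseries of
`∑ rⁿ / n! = eʳ`. Hence `|E_{α,β}(w)| ≤ exp |w|^{1/α}`, which gives the growth bound with `d = 1`.

On the slit plane `F_λ(z) = ∑ λᵏ z^{αk+1} / Γ(αk + 2)` is differentiated termwise, the factor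
`αk + 1` cancelling against `Γ(αk + 2) = (αk + 1) Γ(αk + 1)`. At the origin the difference
quotient is `E_{α,2}(z^α λ)`, which tends to `E_{α,2}(0) = 1 = E_α(0)`.
-/

open Complex Real Topology Filter Nat

noncomputable def mittagLeffler (α β : ℝ) (w : ℂ) : ℂ :=
  ∑' k : ℕ, w ^ k / Real.Gamma (α * k + β)

noncomputable def mittagLefflerF (α : ℝ) (lam z : ℂ) : ℂ :=
  z * mittagLeffler α 2 (z ^ (α : ℂ) * lam)

theorem Real.factorial_le_Gamma {n : ℕ} {x : ℝ} (h2 : 2 ≤ x) (hn : n + 1 ≤ x) :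
    (n ! : ℝ) ≤ Real.Gamma x := by
  rcases n.eq_zero_or_pos with rfl | hn0
  · simpa [Real.Gamma_two] using Real.Gamma_strictMonoOn_Ici.monotoneOn Set.self_mem_Ici h2 h2
  · rw [← Real.Gamma_nat_eq_factorial]
    exact Real.Gamma_strictMonoOn_Ici.monotoneOn (by rw [Set.mem_Ici]; norm_cast; omega) h2 hn

section RealSeries

variable {α β : ℝ}

theorem summable_pow_div_Gamma (hα : 1 ≤ α) (hβ : 1 ≤ β) (q : ℝ) :
    Summable fun k : ℕ => q ^ k / Real.Gamma (α * k + β) := by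
  refine (Real.summable_pow_div_factorial |q|).of_norm_bounded_eventually ?_
  filter_upwards [Nat.cofinite_eq_atTop ▸ eventually_ge_atTop 1] with k hk
  have hk' : (1 : ℝ) ≤ k := by exact_mod_cast hk
  rw [norm_div, norm_pow, Real.norm_eq_abs,
    Real.norm_of_nonneg (Real.Gamma_nonneg_of_nonneg (by positivity))]
  gcongr
  exact Real.factorial_le_Gamma (by nlinarith) (by nlinarith)

theorem exists_strictMono_rpow_pow_div_Gamma_le (hα : 1 ≤ α) (hβ : 2 ≤ β) {r : ℝ} (hr : 0 ≤ r) :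
    ∃ e : ℕ → ℕ, StrictMono e ∧
      ∀ k : ℕ, (r ^ α) ^ k / Real.Gamma (α * k + β) ≤ r ^ e k / (e k)! := by
  have hx (k : ℕ) : 0 ≤ α * k := by positivity
  have hterm (k n : ℕ) (hrn : r ^ (α * k) ≤ r ^ n) (hn : (n : ℝ) < α * k + 1) :
      (r ^ α) ^ k / Real.Gamma (α * k + β) ≤ r ^ n / n ! := by
    rw [← Real.rpow_natCast (r ^ α), ← Real.rpow_mul hr]
    exact div_le_div₀ (by positivity) hrn (by positivity)
      (Real.factorial_le_Gamma (by linarith [hx k]) (by linarith))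
  rcases le_or_gt r 1 with hr1 | hr1
  · refine ⟨fun k => ⌊α * k⌋₊, strictMono_nat_of_lt_succ fun k => ?_, fun k => hterm k _ ?_ ?_⟩
    · refine Nat.lt_iff_add_one_le.2 ((Nat.le_floor_iff (by positivity)).2 ?_)
      push_cast
      nlinarith [Nat.floor_le (hx k)]
    · rw [← Real.rpow_natCast]
      exact Real.rpow_le_rpow_of_exponent_ge' hr hr1 (by positivity) (Nat.floor_le (hx k))
    · linarith [Nat.floor_le (hx k)]
  · refine ⟨fun k => ⌈α * k⌉₊, strictMono_nat_of_lt_succ fun k => ?_, fun k => hterm k _ ?_ ?_⟩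
    · refine Nat.lt_ceil.2 ((Nat.ceil_lt_add_one (hx k)).trans_le ?_)
      push_cast
      nlinarith
    · rw [← Real.rpow_natCast]
      exact Real.rpow_le_rpow_of_exponent_le hr1.le (Nat.le_ceil _)
    · exact Nat.ceil_lt_add_one (hx k)

theorem tsum_rpow_pow_div_Gamma_le_exp (hα : 1 ≤ α) (hβ : 2 ≤ β) {r : ℝ} (hr : 0 ≤ r) :
    ∑' k : ℕ, (r ^ α) ^ k / Real.Gamma (α * k + β) ≤ Real.exp r := by
  obtain ⟨e, he, hle⟩ := exists_strictMono_rpow_pow_div_Gamma_le hα hβ hr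
  have hexp := NormedSpace.expSeries_div_hasSum_exp r
  rw [← Real.exp_eq_exp_ℝ] at hexp
  calc ∑' k : ℕ, (r ^ α) ^ k / Real.Gamma (α * k + β)
      ≤ ∑' k : ℕ, r ^ e k / (e k)! :=
        Summable.tsum_le_tsum hle (summable_pow_div_Gamma hα (by linarith) _)
          (hexp.summable.comp_injective he.injective)
    _ ≤ ∑' n : ℕ, r ^ n / n ! :=
        tsum_comp_le_tsum_of_inj hexp.summable (fun n => by positivity) he.injective
    _ = Real.exp r := hexp.tsum_eq

end RealSeries

section MittagLeffler

variable {α β : ℝ}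

theorem norm_pow_div_Gamma_mul_add (hα : 0 ≤ α) (hβ : 0 ≤ β) (w : ℂ) (k : ℕ) :
    ‖w ^ k / (Real.Gamma (α * k + β) : ℂ)‖ = ‖w‖ ^ k / Real.Gamma (α * k + β) := by
  rw [norm_div, norm_pow, Complex.norm_real,
    Real.norm_of_nonneg (Real.Gamma_nonneg_of_nonneg (by positivity))]

theorem summable_norm_pow_div_Gamma (hα : 1 ≤ α) (hβ : 1 ≤ β) (w : ℂ) :
    Summable fun k : ℕ => ‖w ^ k / (Real.Gamma (α * k + β) : ℂ)‖ := by
  simpa only [norm_pow_div_Gamma_mul_add (zero_le_one.trans hα) (zero_le_one.trans hβ)]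
    using summable_pow_div_Gamma hα hβ ‖w‖

theorem norm_mittagLeffler_le_exp (hα : 1 ≤ α) (hβ : 2 ≤ β) (w : ℂ) :
    ‖mittagLeffler α β w‖ ≤ Real.exp (‖w‖ ^ (1 / α)) := by
  have hw : (‖w‖ ^ (1 / α)) ^ α = ‖w‖ := by
    rw [← Real.rpow_mul (norm_nonneg w), one_div_mul_cancel (by positivity), Real.rpow_one]
  calc ‖mittagLeffler α β w‖ ≤ ∑' k : ℕ, ‖w ^ k / (Real.Gamma (α * k + β) : ℂ)‖ :=
        norm_tsum_le_tsum_norm (summable_norm_pow_div_Gamma hα (by linarith) w)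
    _ = ∑' k : ℕ, ((‖w‖ ^ (1 / α)) ^ α) ^ k / Real.Gamma (α * k + β) := by
        simp only [norm_pow_div_Gamma_mul_add (zero_le_one.trans hα) (zero_le_two.trans hβ), hw]
    _ ≤ Real.exp (‖w‖ ^ (1 / α)) := tsum_rpow_pow_div_Gamma_le_exp hα hβ (by positivity)

theorem continuous_mittagLeffler (hα : 1 ≤ α) (hβ : 1 ≤ β) : Continuous (mittagLeffler α β) := by
  refine continuous_iff_continuousAt.2 fun w => ?_
  have hball : Metric.ball (0 : ℂ) (‖w‖ + 1) ∈ 𝓝 w :=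
    Metric.isOpen_ball.mem_nhds (by simp)
  refine (continuousOn_tsum (fun k => ((continuous_pow k).div_const _).continuousOn)
    (summable_pow_div_Gamma hα hβ (‖w‖ + 1)) fun k z hz => ?_).continuousAt hball
  rw [norm_pow_div_Gamma_mul_add (by linarith) (by linarith)]
  gcongr
  exact (mem_ball_zero_iff.1 hz).le

theorem mittagLeffler_zero (α β : ℝ) : mittagLeffler α β 0 = (Real.Gamma β : ℂ)⁻¹ := by
  rw [mittagLeffler, tsum_eq_single 0 fun k hk => by rw [zero_pow hk, zero_div]]
  simp

end MittagLeffler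

theorem hasDerivAt_id_mul_of_continuousAt_zero {𝕜 : Type*} [NontriviallyNormedField 𝕜]
    {g : 𝕜 → 𝕜} (hg : ContinuousAt g 0) : HasDerivAt (fun z => z * g z) (g 0) 0 := by
  rw [hasDerivAt_iff_tendsto_slope]
  refine (hg.tendsto.mono_left nhdsWithin_le_nhds).congr' ?_
  filter_upwards [self_mem_nhdsWithin] with z hz
  rw [slope_def_field, zero_mul, sub_zero, sub_zero, mul_div_cancel_left₀ _ hz]

section MittagLefflerF

variable {α : ℝ}

theorem hasDerivAt_mittagLefflerF_zero (hα : 1 ≤ α) (lam : ℂ) :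
    HasDerivAt (mittagLefflerF α lam) 1 0 := by
  have hα0 : (α : ℂ) ≠ 0 := ofReal_ne_zero.2 (by positivity)
  have hcpow : ContinuousAt (fun z : ℂ => z ^ (α : ℂ)) 0 :=
    (continuousAt_cpow_zero_of_re_pos (z := α) (by simpa using zero_lt_one.trans_le hα)).comp
      (f := fun z : ℂ => (z, (α : ℂ))) (by fun_prop)
  have hpow : ContinuousAt (fun z : ℂ => z ^ (α : ℂ) * lam) 0 := hcpow.mul continuousAt_const
  have h := hasDerivAt_id_mul_of_continuousAt_zero
    ((continuous_mittagLeffler hα one_le_two).continuousAt.comp hpow)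
  simp only [Function.comp_apply, mittagLeffler_zero, zero_cpow hα0, zero_mul, Real.Gamma_two,
    ofReal_one, inv_one] at h
  exact h

theorem mul_cpow_mul_pow (hα : 0 ≤ α) (lam z : ℂ) (k : ℕ) :
    z * (z ^ (α : ℂ) * lam) ^ k = lam ^ k * z ^ ((α * k + 1 : ℝ) : ℂ) := by
  rcases eq_or_ne z 0 with rfl | hz
  · have : ((α * k + 1 : ℝ) : ℂ) ≠ 0 := ofReal_ne_zero.2 (by positivity)
    rw [zero_cpow this, zero_mul, mul_zero]
  · rw [ofReal_add, ofReal_one, cpow_add _ _ hz, cpow_one, ofReal_mul, ofReal_natCast,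
      mul_comm (α : ℂ), cpow_nat_mul, mul_pow]
    ring

theorem mittagLefflerF_eq_tsum (hα : 0 ≤ α) (lam : ℂ) :
    mittagLefflerF α lam =
      fun z => ∑' k : ℕ, lam ^ k * z ^ ((α * k + 1 : ℝ) : ℂ) / Real.Gamma (α * k + 2) := by
  ext z
  simp only [mittagLefflerF, mittagLeffler, ← tsum_mul_left, ← mul_div_assoc,
    mul_cpow_mul_pow hα]

theorem hasDerivAt_cpow_div_Gamma (hα : 0 ≤ α) (lam : ℂ) (k : ℕ) {y : ℂ} (hy : y ∈ slitPlane) :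
    HasDerivAt (fun z : ℂ => lam ^ k * z ^ ((α * k + 1 : ℝ) : ℂ) / Real.Gamma (α * k + 2))
      ((y ^ (α : ℂ) * lam) ^ k / Real.Gamma (α * k + 1)) y := by
  have hΓ : Real.Gamma (α * k + 2) = (α * k + 1) * Real.Gamma (α * k + 1) := by
    rw [show α * k + 2 = α * k + 1 + 1 by ring, Real.Gamma_add_one (by positivity)]
  refine (((hasStrictDerivAt_cpow_const hy).hasDerivAt.const_mul (lam ^ k)).div_const
    (Real.Gamma (α * k + 2) : ℂ)).congr_deriv ?_
  rw [hΓ, ofReal_mul, ofReal_add, ofReal_one, ofReal_mul, ofReal_natCast, add_sub_cancel_right,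
    mul_comm (α : ℂ), cpow_nat_mul, mul_pow]
  have : (k * α + 1 : ℂ) ≠ 0 := by exact_mod_cast (by positivity : (k : ℝ) * α + 1 ≠ 0)
  field_simp

theorem hasDerivAt_mittagLefflerF_of_mem_slitPlane (hα : 1 ≤ α) (lam : ℂ) {x : ℂ}
    (hx : x ∈ slitPlane) :
    HasDerivAt (mittagLefflerF α lam) (mittagLeffler α 1 (x ^ (α : ℂ) * lam)) x := by
  have hα0 : 0 ≤ α := by linarith
  obtain ⟨ε, hε, hball⟩ := Metric.isOpen_iff.1 isOpen_slitPlane x hx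
  have hbound (k : ℕ) (y : ℂ) (hy : y ∈ Metric.ball x ε) :
      ‖(y ^ (α : ℂ) * lam) ^ k / (Real.Gamma (α * k + 1) : ℂ)‖ ≤
        ((‖x‖ + ε) ^ α * ‖lam‖) ^ k / Real.Gamma (α * k + 1) := by
    have hy' : ‖y‖ ≤ ‖x‖ + ε := by
      linarith [norm_le_norm_add_norm_sub' y x, (mem_ball_iff_norm.1 hy).le]
    rw [norm_pow_div_Gamma_mul_add hα0 zero_le_one, norm_mul, norm_cpow_real]
    gcongr
  have hsum : Summable fun k : ℕ =>
      lam ^ k * x ^ ((α * k + 1 : ℝ) : ℂ) / Real.Gamma (α * k + 2) := by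
    simpa only [mul_div_assoc, ← mul_cpow_mul_pow hα0]
      using ((summable_norm_pow_div_Gamma hα one_le_two (x ^ (α : ℂ) * lam)).of_norm).mul_left x
  rw [mittagLefflerF_eq_tsum hα0]
  exact hasDerivAt_tsum_of_isPreconnected (summable_pow_div_Gamma hα le_rfl _) Metric.isOpen_ball
    (convex_ball x ε).isPreconnected (fun k y hy => hasDerivAt_cpow_div_Gamma hα0 lam k (hball hy))
    hbound (Metric.mem_ball_self hε) hsum (Metric.mem_ball_self hε)

theorem hasDerivAt_mittagLefflerF_ofReal (hα : 1 ≤ α) (lam : ℂ) {t : ℝ} (ht : 0 ≤ t) :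
    HasDerivAt (mittagLefflerF α lam) (mittagLeffler α 1 ((t : ℂ) ^ (α : ℂ) * lam)) t := by
  rcases ht.eq_or_lt with rfl | ht
  · have hα0 : (α : ℂ) ≠ 0 := ofReal_ne_zero.2 (by positivity)
    simpa [zero_cpow hα0, mittagLeffler_zero] using hasDerivAt_mittagLefflerF_zero hα lam
  · exact hasDerivAt_mittagLefflerF_of_mem_slitPlane hα lam (ofReal_mem_slitPlane.2 ht)

theorem norm_mittagLefflerF_le (hα : 1 ≤ α) (lam z : ℂ) :
    ‖mittagLefflerF α lam z‖ ≤ ‖z‖ * Real.exp (‖z‖ * ‖lam‖ ^ (1 / α)) := by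
  have hnorm : ‖z ^ (α : ℂ) * lam‖ ^ (1 / α) = ‖z‖ * ‖lam‖ ^ (1 / α) := by
    rw [norm_mul, norm_cpow_real, Real.mul_rpow (by positivity) (norm_nonneg _),
      ← Real.rpow_mul (norm_nonneg _), mul_one_div_cancel (by positivity), Real.rpow_one]
  rw [mittagLefflerF, norm_mul, ← hnorm]
  gcongr
  exact norm_mittagLeffler_le_exp hα le_rfl _

end MittagLefflerF

theorem mittagLeffler_F_deriv_and_bound_general (ζ : ℝ) (hζ1 : 1 < ζ) (lam : ℂ) :
    (∀ t : ℝ, 0 ≤ t →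
      HasDerivAt (fun z : ℂ => z * ∑' k : ℕ, (z ^ (ζ : ℂ) * lam) ^ k / Complex.Gamma (ζ * k + 2))
        (∑' k : ℕ, (((t : ℂ)) ^ (ζ : ℂ) * lam) ^ k / Complex.Gamma (ζ * k + 1)) (t : ℂ)) ∧
    ∃ d : ℝ, 0 < d ∧ ∀ z : ℂ,
      ‖z * ∑' k : ℕ, (z ^ (ζ : ℂ) * lam) ^ k / Complex.Gamma (ζ * k + 2)‖ ≤
        d * (1 + ‖z‖) * Real.exp (‖z‖ * ‖lam‖ ^ (1 / ζ)) := by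
  -- turn `Complex.Gamma (ζ * k + 2)` into `↑(Real.Gamma (ζ * k + 2))`, so that the goal unfolds
  -- to `mittagLefflerF` and `mittagLeffler`
  simp only [← ofReal_ofNat, ← ofReal_one, ← ofReal_natCast, ← ofReal_mul, ← ofReal_add,
    Complex.Gamma_ofReal]
  refine ⟨fun t ht => hasDerivAt_mittagLefflerF_ofReal hζ1.le lam ht, 1, one_pos, fun z => ?_⟩
  calc ‖mittagLefflerF ζ lam z‖ ≤ ‖z‖ * Real.exp (‖z‖ * ‖lam‖ ^ (1 / ζ)) :=
        norm_mittagLefflerF_le hζ1.le lam z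
    _ ≤ 1 * (1 + ‖z‖) * Real.exp (‖z‖ * ‖lam‖ ^ (1 / ζ)) := by gcongr; linarith

/-- For `ζ ∈ (1,2]` and `λ ∈ ℂ`, the function `F_λ(z) = z E_{ζ,2}(z^ζ λ)` satisfies
`F_λ'(t) = E_ζ(t^ζ λ)` for real `t ≥ 0`, and there is `d_ζ > 0` with
`|F_λ(z)| ≤ d_ζ (1+|z|) e^{|z| |λ|^{1/ζ}}` for all `z ∈ ℂ`. -/
theorem mittagLeffler_F_deriv_and_bound (ζ : ℝ) (hζ1 : 1 < ζ) (hζ2 : ζ ≤ 2) (lam : ℂ) :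
    (∀ t : ℝ, 0 ≤ t →
      HasDerivAt (fun z : ℂ => z * ∑' k : ℕ, (z ^ (ζ : ℂ) * lam) ^ k / Complex.Gamma (ζ * k + 2))
        (∑' k : ℕ, (((t : ℂ)) ^ (ζ : ℂ) * lam) ^ k / Complex.Gamma (ζ * k + 1)) (t : ℂ)) ∧
    ∃ d : ℝ, 0 < d ∧ ∀ z : ℂ,
      ‖z * ∑' k : ℕ, (z ^ (ζ : ℂ) * lam) ^ k / Complex.Gamma (ζ * k + 2)‖ ≤
        d * (1 + ‖z‖) * Real.exp (‖z‖ * ‖lam‖ ^ (1 / ζ)) :=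
  mittagLeffler_F_deriv_and_bound_general ζ hζ1 lam
end

section
/- Let X be a Banach space, ω ∈ ℕ₀, l ∈ ℕ₀, and let x ∈ X. Let Γ be the upwards oriented boundary of {λ ∈ Σ_φ : |λ| ≥ r} for some φ ∈ (π/2, π) and r > 0, and let a > r, b > 1 be such that Re((a−λ)^{b}) ≥ c|a−λ|^{b} > 0 on and to the left of Γ for some c > 0. Then lim_{ε→0+} (1/(2πi)) ∫_Γ e^{−ε(a−λ)^{b}} λ^{l−1−ω} dλ · x = δ_{ωl} x, where δ_{ωl} is the Kronecker delta. -/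
/-!
For every `ε > 0` the integrand `f_ε(λ) = e^{-ε(a-λ)^b} λ^k`, `k = l - 1 - ω`, is holomorphic
on the closed region to the left of `Γ` outside the disc of radius `r` (there `Re λ < 0 < a`, so
`a - λ` stays in the slit plane), and the hypothesis `Re((a-λ)^b) ≥ c|a-λ|^b` makes it decay like
`|λ|^k e^{-εc|λ|^b}`. Cauchy's theorem on the annular sectors `r ≤ |λ| ≤ R`, `φ ≤ arg λ ≤ 2π - φ`
(a rectangle in the coordinates `λ = e^w`), followed by `R → ∞`, moves `Γ` onto the full circle
`|λ| = r`. On that compact circle `ε ↦ ∮ f_ε` is continuous, so as `ε → 0` it tends to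
`∮ λ^k dλ = 2πi δ_{k,-1}`, and `k = -1` exactly when `ω = l`.
-/

open Real Complex MeasureTheory Filter Set intervalIntegral

lemma norm_ofReal_mul_exp_mul_I {ρ : ℝ} (hρ : 0 ≤ ρ) (θ : ℝ) : ‖(ρ : ℂ) * exp (θ * I)‖ = ρ := by
  rw [norm_mul, norm_exp_ofReal_mul_I, norm_real, Real.norm_of_nonneg hρ, mul_one]

lemma le_abs_arg_of_re_le {φ : ℝ} (hφπ : φ ≤ π) {z : ℂ} (hz : z ≠ 0)
    (hre : z.re ≤ ‖z‖ * Real.cos φ) : φ ≤ |arg z| := by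
  by_contra! h
  have hcos : Real.cos φ < Real.cos (arg z) := by
    rw [← Real.cos_abs (arg z)]
    exact Real.cos_lt_cos_of_nonneg_of_le_pi (abs_nonneg _) hφπ h
  rw [cos_arg hz, lt_div_iff₀ (norm_pos_iff.2 hz)] at hcos
  linarith

lemma le_abs_arg_ofReal_mul_exp_mul_I {φ ρ θ : ℝ} (hφ0 : 0 ≤ φ) (hφπ : φ ≤ π) (hρ : 0 < ρ)
    (hθ : θ ∈ Icc φ (2 * π - φ)) : φ ≤ |arg (ρ * exp (θ * I))| := by
  have hcos : Real.cos θ ≤ Real.cos φ := by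
    rcases le_total θ π with hθπ | hπθ
    · exact Real.cos_le_cos_of_nonneg_of_le_pi hφ0 hθπ hθ.1
    · rw [← Real.cos_two_pi_sub θ]
      exact Real.cos_le_cos_of_nonneg_of_le_pi hφ0 (by linarith) (by linarith [hθ.2])
  refine le_abs_arg_of_re_le hφπ (mul_ne_zero (ofReal_ne_zero.2 hρ.ne') (exp_ne_zero _)) ?_
  rw [norm_ofReal_mul_exp_mul_I hρ.le, re_ofReal_mul, exp_ofReal_mul_I_re]
  exact mul_le_mul_of_nonneg_left hcos hρ.le

lemma le_norm_and_le_abs_arg_ofReal_mul_exp_mul_I {r φ ρ θ : ℝ} (hr : 0 < r) (hφ0 : 0 ≤ φ)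
    (hφπ : φ ≤ π) (hρ : r ≤ ρ) (hθ : θ ∈ Icc φ (2 * π - φ)) :
    r ≤ ‖(ρ : ℂ) * exp (θ * I)‖ ∧ φ ≤ |arg (ρ * exp (θ * I))| :=
  ⟨(norm_ofReal_mul_exp_mul_I (hr.trans_le hρ).le θ).symm ▸ hρ,
    le_abs_arg_ofReal_mul_exp_mul_I hφ0 hφπ (hr.trans_le hρ) hθ⟩

lemma re_neg_of_pi_div_two_lt_abs_arg {z : ℂ} (hz : π / 2 < |arg z|) : z.re < 0 :=
  not_le.1 fun h => hz.not_ge (abs_arg_le_pi_div_two_iff.2 h)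

lemma re_sub_pos_of_norm_lt {a : ℝ} {z : ℂ} (hz : ‖z‖ < a) : 0 < ((a : ℂ) - z).re := by
  rw [sub_re, ofReal_re]
  linarith [re_le_norm z]

lemma norm_le_norm_sub_of_re_nonpos {a : ℝ} (ha : 0 ≤ a) {z : ℂ} (hz : z.re ≤ 0) :
    ‖z‖ ≤ ‖(a : ℂ) - z‖ := by
  refine sq_le_sq₀ (norm_nonneg _) (norm_nonneg _) |>.1 ?_
  rw [Complex.sq_norm, Complex.sq_norm, normSq_apply, normSq_apply, sub_re, sub_im, ofReal_re,
    ofReal_im]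
  nlinarith

lemma integral_horizontal_comp_exp_eq_integral_ray {f : ℂ → ℂ} {r R y : ℝ} (hr : 0 < r)
    (hR : 0 < R) (hf : ContinuousOn (fun s : ℝ => f (s * exp (y * I))) (uIcc r R)) :
    ∫ x in Real.log r..Real.log R, f (exp (x + y * I)) * exp (x + y * I) =
      ∫ s in r..R, f (s * exp (y * I)) * exp (y * I) := by
  have hcont : ContinuousOn (fun s : ℝ => f (s * exp (y * I)) * exp (y * I))
      (Real.exp '' uIcc (Real.log r) (Real.log R)) := by
    rw [Real.image_exp_uIcc, Real.exp_log hr, Real.exp_log hR]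
    exact hf.mul continuousOn_const
  have hsubst := integral_deriv_smul_comp' (fun x _ => Real.hasDerivAt_exp x)
    Real.continuous_exp.continuousOn hcont
  rw [Real.exp_log hr, Real.exp_log hR] at hsubst
  rw [← hsubst]
  refine integral_congr fun x _ => ?_
  simp only [Function.comp_apply, Complex.exp_add, ← ofReal_exp, real_smul]
  ring

theorem integral_boundary_annularSector_eq_zero {f : ℂ → ℂ} {r R α β : ℝ} (hr : 0 < r)
    (hrR : r ≤ R) (hαβ : α ≤ β)
    (hf : ∀ ρ ∈ Icc r R, ∀ θ ∈ Icc α β, DifferentiableAt ℂ f (ρ * exp (θ * I))) :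
    (∫ s in r..R, f (s * exp (α * I)) * exp (α * I)) -
        (∫ s in r..R, f (s * exp (β * I)) * exp (β * I)) +
        (∫ θ in α..β, f (R * exp (θ * I)) * (I * R * exp (θ * I))) -
        ∫ θ in α..β, f (r * exp (θ * I)) * (I * r * exp (θ * I)) = 0 := by
  have hR : 0 < R := hr.trans_le hrR
  set g : ℂ → ℂ := fun w => f (exp w) * exp w
  have hg : DifferentiableOn ℂ g (uIcc (Real.log r) (Real.log R) ×ℂ uIcc α β) := by
    rintro w ⟨hw_re, hw_im⟩
    rw [uIcc_of_le (Real.log_le_log hr hrR)] at hw_re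
    rw [uIcc_of_le hαβ] at hw_im
    have hmem : Real.exp w.re ∈ Icc r R := by
      rw [← Real.exp_log hr, ← Real.exp_log hR]
      exact ⟨Real.exp_le_exp.2 hw_re.1, Real.exp_le_exp.2 hw_re.2⟩
    have hfw := hf _ hmem _ hw_im
    rw [ofReal_exp, ← Complex.exp_add, re_add_im] at hfw
    exact ((hfw.comp w differentiableAt_exp).mul differentiableAt_exp).differentiableWithinAt
  have hside : ∀ y ∈ Icc α β, ∫ x in Real.log r..Real.log R, g (x + y * I) =
      ∫ s in r..R, f (s * exp (y * I)) * exp (y * I) := fun y hy =>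
    integral_horizontal_comp_exp_eq_integral_ray hr hR fun s hs =>
      ((hf s (uIcc_of_le hrR ▸ hs) y hy).continuousAt.comp (x := s)
        (continuous_ofReal.mul continuous_const).continuousAt).continuousWithinAt
  have harc : ∀ ρ : ℝ, 0 < ρ → I • ∫ y in α..β, g (Real.log ρ + y * I) =
      ∫ θ in α..β, f (ρ * exp (θ * I)) * (I * ρ * exp (θ * I)) := by
    intro ρ hρ
    rw [smul_eq_mul, ← intervalIntegral.integral_const_mul]
    refine integral_congr fun y _ => ?_
    simp only [g, Complex.exp_add, ← ofReal_exp, Real.exp_log hρ]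
    ring
  have hrect := integral_boundary_rect_eq_zero_of_differentiableOn g
    ⟨Real.log r, α⟩ ⟨Real.log R, β⟩ hg
  dsimp only at hrect
  rwa [hside α ⟨le_rfl, hαβ⟩, hside β ⟨hαβ, le_rfl⟩, harc R hR, harc r hr] at hrect

lemma integrableOn_Ioi_ray {f : ℂ → ℂ} {M : ℝ → ℝ} {r θ : ℝ}
    (hf : ∀ s ∈ Ioi r, ContinuousAt f (s * exp (θ * I)))
    (hfM : ∀ s ∈ Ioi r, ‖f (s * exp (θ * I))‖ ≤ M s) (hM : IntegrableOn M (Ioi r)) :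
    IntegrableOn (fun s : ℝ => f (s * exp (θ * I)) * exp (θ * I)) (Ioi r) := by
  refine hM.mono' ?_ ?_
  · refine ContinuousOn.aestronglyMeasurable (fun s hs => ?_) measurableSet_Ioi
    exact ((hf s hs).comp (x := s) (continuous_ofReal.mul continuous_const).continuousAt)
      |>.continuousWithinAt.mul continuousWithinAt_const
  · filter_upwards [ae_restrict_mem measurableSet_Ioi] with s hs
    rw [norm_mul, norm_exp_ofReal_mul_I, mul_one]
    exact hfM s hs

lemma tendsto_arc_integral_zero {f : ℂ → ℂ} {M : ℝ → ℝ} {α β : ℝ}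
    (hfM : ∀ᶠ R : ℝ in atTop, ∀ θ ∈ uIcc α β, ‖f (R * exp (θ * I))‖ ≤ M R)
    (hM : Tendsto (fun R => R * M R) atTop (nhds 0)) :
    Tendsto (fun R : ℝ => ∫ θ in α..β, f (R * exp (θ * I)) * (I * R * exp (θ * I)))
      atTop (nhds 0) := by
  have hbound : Tendsto (fun R => R * M R * |β - α|) atTop (nhds 0) := by
    simpa using hM.mul_const |β - α|
  refine squeeze_zero_norm' ?_ hbound
  filter_upwards [hfM, eventually_ge_atTop 0] with R hR hR0
  refine norm_integral_le_of_norm_le_const fun θ hθ => ?_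
  rw [norm_mul, mul_assoc, norm_mul, norm_I, one_mul, norm_ofReal_mul_exp_mul_I hR0, mul_comm]
  exact mul_le_mul_of_nonneg_left (hR θ (uIoc_subset_uIcc hθ)) hR0

lemma intervalIntegrable_circle_arc {f : ℂ → ℂ} {r : ℝ} (hr : 0 ≤ r)
    (hf : ContinuousOn f (Metric.sphere 0 r)) (α β : ℝ) :
    IntervalIntegrable (fun θ : ℝ => f (r * exp (θ * I)) * (I * r * exp (θ * I))) volume α β := by
  have hparam : Continuous fun θ : ℝ => (r : ℂ) * exp (θ * I) := by fun_prop
  have hmaps : ∀ θ : ℝ, (r : ℂ) * exp (θ * I) ∈ Metric.sphere (0 : ℂ) r := fun θ => by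
    simp [hr]
  exact ((hf.comp_continuous hparam hmaps).mul (by fun_prop)).intervalIntegrable α β

lemma integral_eq_circleIntegral (f : ℂ → ℂ) (r t : ℝ) :
    ∫ θ in t..t + 2 * π, f (r * exp (θ * I)) * (I * r * exp (θ * I)) = ∮ z in C(0, r), f z := by
  have hper : Function.Periodic (fun θ => deriv (circleMap 0 r) θ • f (circleMap 0 r θ))
      (2 * π) := by
    simp only [deriv_circleMap]
    exact (periodic_circleMap 0 r).comp fun z => (z * I) • f z
  have hshift := hper.intervalIntegral_add_eq t 0
  rw [zero_add] at hshift
  rw [circleIntegral, ← hshift]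
  refine integral_congr fun θ _ => ?_
  simp only [deriv_circleMap, circleMap_zero, smul_eq_mul]
  ring

lemma integral_rays_eq_integral_arc {f : ℂ → ℂ} {M : ℝ → ℝ} {r φ : ℝ} (hr : 0 < r)
    (hφ0 : 0 ≤ φ) (hφπ : φ ≤ π)
    (hf : ∀ z : ℂ, r ≤ ‖z‖ → φ ≤ |arg z| → DifferentiableAt ℂ f z)
    (hfM : ∀ z : ℂ, r ≤ ‖z‖ → φ ≤ |arg z| → ‖f z‖ ≤ M ‖z‖)
    (hM : IntegrableOn M (Ioi r)) (hM_top : Tendsto (fun R => R * M R) atTop (nhds 0)) :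
    ∫ s in Ioi r, (f (s * exp (φ * I)) * exp (φ * I) - f (s * exp (-φ * I)) * exp (-φ * I)) =
      ∫ θ in φ..2 * π - φ, f (r * exp (θ * I)) * (I * r * exp (θ * I)) := by
  set β := 2 * π - φ
  have hφβ : φ ≤ β := by simp only [β]; linarith
  have hβ : exp (β * I) = exp (-φ * I) := by
    rw [show (β : ℂ) * I = -φ * I + 2 * π * I by push_cast [β]; ring, Complex.exp_add,
      exp_two_pi_mul_I, mul_one]
  have hsector := fun {ρ θ : ℝ} => @le_norm_and_le_abs_arg_ofReal_mul_exp_mul_I r φ ρ θ hr hφ0 hφπ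
  have hray : ∀ θ ∈ Icc φ β,
      IntegrableOn (fun s : ℝ => f (s * exp (θ * I)) * exp (θ * I)) (Ioi r) := by
    refine fun θ hθ => integrableOn_Ioi_ray (M := M) (fun s hs => ?_) (fun s hs => ?_) hM
    · obtain ⟨hnorm, harg⟩ := hsector hs.le hθ
      exact (hf _ hnorm harg).continuousAt
    · obtain ⟨hnorm, harg⟩ := hsector hs.le hθ
      simpa only [norm_ofReal_mul_exp_mul_I (hr.trans hs).le] using hfM _ hnorm harg
  have hup := hray φ ⟨le_rfl, hφβ⟩
  have hdown : IntegrableOn (fun s : ℝ => f (s * exp (-φ * I)) * exp (-φ * I)) (Ioi r) := by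
    simpa only [hβ] using hray β ⟨hφβ, le_rfl⟩
  set C : ℝ → ℂ := fun ρ => ∫ θ in φ..β, f (ρ * exp (θ * I)) * (I * ρ * exp (θ * I))
  have hcauchy : ∀ᶠ R in atTop, (∫ s in r..R, f (s * exp (φ * I)) * exp (φ * I)) -
      (∫ s in r..R, f (s * exp (-φ * I)) * exp (-φ * I)) = C r - C R := by
    filter_upwards [eventually_ge_atTop r] with R hR
    have h := integral_boundary_annularSector_eq_zero hr hR hφβ fun ρ hρ θ hθ =>
      hf _ (hsector hρ.1 hθ).1 (hsector hρ.1 hθ).2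
    rw [hβ] at h
    linear_combination h
  have harc : Tendsto C atTop (nhds 0) := by
    refine tendsto_arc_integral_zero ?_ hM_top
    filter_upwards [eventually_ge_atTop r] with R hR θ hθ
    obtain ⟨hnorm, harg⟩ := hsector hR (uIcc_of_le hφβ ▸ hθ)
    simpa only [norm_ofReal_mul_exp_mul_I (hr.trans_le hR).le] using hfM _ hnorm harg
  rw [integral_sub hup hdown]
  exact tendsto_nhds_unique ((intervalIntegral_tendsto_integral_Ioi r hup tendsto_id).sub
    (intervalIntegral_tendsto_integral_Ioi r hdown tendsto_id))
    (by simpa using (tendsto_const_nhds.sub harc).congr' (hcauchy.mono fun R h => h.symm))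

theorem integral_sectorContour_eq_circleIntegral {f : ℂ → ℂ} {M : ℝ → ℝ} {r φ : ℝ}
    (hr : 0 < r) (hφ0 : 0 ≤ φ) (hφπ : φ ≤ π)
    (hf : ∀ z : ℂ, r ≤ ‖z‖ → φ ≤ |arg z| → DifferentiableAt ℂ f z)
    (hfM : ∀ z : ℂ, r ≤ ‖z‖ → φ ≤ |arg z| → ‖f z‖ ≤ M ‖z‖)
    (hcirc : ContinuousOn f (Metric.sphere 0 r))
    (hM : IntegrableOn M (Ioi r)) (hM_top : Tendsto (fun R => R * M R) atTop (nhds 0)) :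
    (∫ s in Ioi r, (f (s * exp (φ * I)) * exp (φ * I) - f (s * exp (-φ * I)) * exp (-φ * I))) +
      ∫ θ in (-φ)..φ, f (r * exp (θ * I)) * (I * r * exp (θ * I)) = ∮ z in C(0, r), f z := by
  rw [integral_rays_eq_integral_arc hr hφ0 hφπ hf hfM hM hM_top, add_comm,
    integral_add_adjacent_intervals (intervalIntegrable_circle_arc hr.le hcirc _ _)
      (intervalIntegrable_circle_arc hr.le hcirc _ _),
    show 2 * π - φ = -φ + 2 * π by ring, integral_eq_circleIntegral]

lemma circleIntegral_zpow {R : ℝ} (hR : R ≠ 0) (k : ℤ) :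
    ∮ z in C(0, R), z ^ k = if k = -1 then 2 * π * I else 0 := by
  split_ifs with hk
  · simpa [hk] using circleIntegral.integral_sub_center_inv 0 hR
  · simpa using circleIntegral.integral_sub_zpow_of_ne hk 0 0 R

lemma integrableOn_Ioi_rpow_mul_exp_neg_mul_rpow {r b η : ℝ} (hr : 0 < r) (hb : 1 < b)
    (hη : 0 < η) (s : ℝ) :
    IntegrableOn (fun x : ℝ => x ^ s * Real.exp (-η * x ^ b)) (Ioi r) := by
  refine integrable_of_isBigO_exp_neg one_half_pos (fun x hx => ?_)
    (rpow_mul_exp_neg_mul_rpow_isLittleO_exp_neg s hb hη).isBigO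
  have hx0 : x ≠ 0 := (hr.trans_le hx).ne'
  exact ((continuousAt_id.rpow_const (.inl hx0)).mul
    ((continuousAt_id.rpow_const (.inl hx0)).const_mul _).rexp).continuousWithinAt

lemma tendsto_mul_rpow_mul_exp_neg_mul_rpow {b η : ℝ} (hb : 1 < b) (hη : 0 < η) (s : ℝ) :
    Tendsto (fun x : ℝ => x * (x ^ s * Real.exp (-η * x ^ b))) atTop (nhds 0) := by
  have hexp : Tendsto (fun x : ℝ => Real.exp (-(1 / 2) * x)) atTop (nhds 0) :=
    Real.tendsto_exp_atBot.comp (tendsto_id.const_mul_atTop_of_neg (by norm_num))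
  have h := (rpow_mul_exp_neg_mul_rpow_isLittleO_exp_neg (s + 1) hb hη).trans_tendsto hexp
  refine h.congr' ?_
  filter_upwards [eventually_gt_atTop 0] with x hx
  rw [rpow_add hx, rpow_one]
  ring

noncomputable def dampedZpow (a b ε : ℝ) (k : ℤ) (z : ℂ) : ℂ := exp (-ε * (a - z) ^ (b : ℂ)) * z ^ k

section dampedZpow

variable {a b ε : ℝ} {k : ℤ}

lemma differentiableAt_dampedZpow {z : ℂ} (hz : z ≠ 0) (hre : 0 < ((a : ℂ) - z).re) :
    DifferentiableAt ℂ (dampedZpow a b ε k) z :=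
  (((differentiableAt_const _).sub differentiableAt_id).cpow (differentiableAt_const _)
    (.inl hre) |>.const_mul _ |>.cexp).mul (differentiableAt_zpow.2 (.inl hz))

lemma norm_dampedZpow_le {c : ℝ} (hb : 0 ≤ b) (hε : 0 ≤ ε) (hc : 0 ≤ c) {z : ℂ}
    (hz : ‖z‖ ≤ ‖(a : ℂ) - z‖) (hre : c * ‖(a : ℂ) - z‖ ^ b ≤ (((a : ℂ) - z) ^ (b : ℂ)).re) :
    ‖dampedZpow a b ε k z‖ ≤ ‖z‖ ^ (k : ℝ) * Real.exp (-(ε * c) * ‖z‖ ^ b) := by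
  rw [dampedZpow, norm_mul, norm_exp, norm_zpow, Real.rpow_intCast, mul_comm]
  gcongr
  rw [← ofReal_neg, re_ofReal_mul]
  have hpow : ‖z‖ ^ b ≤ ‖(a : ℂ) - z‖ ^ b := by gcongr
  nlinarith [mul_le_mul_of_nonneg_left hpow (mul_nonneg hε hc)]

lemma continuous_circleIntegral_dampedZpow {r : ℝ} (hr : 0 < r) (hra : r < a) :
    Continuous fun ε : ℝ => ∮ z in C(0, r), dampedZpow a b ε k z := by
  refine continuous_parametric_intervalIntegral_of_continuous' ?_ 0 (2 * π)
  have hcm : Continuous fun p : ℝ × ℝ => circleMap 0 r p.2 :=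
    (continuous_circleMap 0 r).comp continuous_snd
  have hslit : ∀ p : ℝ × ℝ, (a : ℂ) - circleMap 0 r p.2 ∈ slitPlane := fun p =>
    .inl (re_sub_pos_of_norm_lt (by rwa [norm_circleMap_zero, abs_of_pos hr]))
  simp only [Function.uncurry_def, deriv_circleMap, dampedZpow]
  exact (hcm.mul continuous_const).smul
    (((continuous_ofReal.comp continuous_fst).neg.mul
      ((continuous_const.sub hcm).cpow continuous_const hslit)).cexp.mul
      (hcm.zpow₀ k fun _ => .inl (circleMap_ne_center hr.ne')))

lemma tendsto_circleIntegral_dampedZpow {r : ℝ} (hr : 0 < r) (hra : r < a) :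
    Tendsto (fun ε : ℝ => ∮ z in C(0, r), dampedZpow a b ε k z) (nhds 0)
      (nhds (if k = -1 then 2 * π * I else 0)) := by
  have h := (continuous_circleIntegral_dampedZpow (b := b) (k := k) hr hra).tendsto 0
  simpa [dampedZpow, circleIntegral_zpow hr.ne'] using h

end dampedZpow

theorem contour_kronecker_delta_limit_general {X : Type*} [NormedAddCommGroup X]
    [NormedSpace ℂ X] (ω l : ℕ) (x : X)
    (φ r a b c : ℝ) (hφ1 : π / 2 < φ) (hφ2 : φ < π) (hr : 0 < r) (ha : r < a)
    (hb : 1 < b) (hc : 0 < c)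
    (hleft : ∀ lam : ℂ, (‖lam‖ ≤ r ∨ φ ≤ |Complex.arg lam|) →
      c * ‖(a : ℂ) - lam‖ ^ b ≤ (((a : ℂ) - lam) ^ ((b : ℝ) : ℂ)).re ∧
      0 < c * ‖(a : ℂ) - lam‖ ^ b) :
    Tendsto (fun ε : ℝ =>
        ((1 / (2 * (π : ℂ) * Complex.I)) *
          ((∫ s in Set.Ioi r,
              (Complex.exp (-(ε : ℂ) * ((a : ℂ) - (s : ℂ) * Complex.exp ((φ : ℂ) * Complex.I)) ^ ((b : ℝ) : ℂ)) *
                 ((s : ℂ) * Complex.exp ((φ : ℂ) * Complex.I)) ^ ((l : ℤ) - 1 - (ω : ℤ)) *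
                 Complex.exp ((φ : ℂ) * Complex.I) -
               Complex.exp (-(ε : ℂ) * ((a : ℂ) - (s : ℂ) * Complex.exp (-(φ : ℂ) * Complex.I)) ^ ((b : ℝ) : ℂ)) *
                 ((s : ℂ) * Complex.exp (-(φ : ℂ) * Complex.I)) ^ ((l : ℤ) - 1 - (ω : ℤ)) *
                 Complex.exp (-(φ : ℂ) * Complex.I))) +
           ∫ θ in (-φ)..φ,
              Complex.exp (-(ε : ℂ) * ((a : ℂ) - (r : ℂ) * Complex.exp ((θ : ℂ) * Complex.I)) ^ ((b : ℝ) : ℂ)) *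
                ((r : ℂ) * Complex.exp ((θ : ℂ) * Complex.I)) ^ ((l : ℤ) - 1 - (ω : ℤ)) *
                (Complex.I * (r : ℂ) * Complex.exp ((θ : ℂ) * Complex.I)))) • x)
      (nhdsWithin 0 (Set.Ioi (0 : ℝ)))
      (nhds (if ω = l then x else 0)) := by
  set k : ℤ := (l : ℤ) - 1 - ω
  have hre : ∀ z : ℂ, φ ≤ |arg z| → z.re < 0 := fun z hz =>
    re_neg_of_pi_div_two_lt_abs_arg (hφ1.trans_le hz)
  have hδ : ((1 / (2 * π * I)) * if k = -1 then 2 * π * I else 0) • x =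
      if ω = l then x else 0 := by
    by_cases h : ω = l
    · rw [if_pos (by omega), one_div, inv_mul_cancel₀ (by simp [pi_ne_zero]), one_smul, if_pos h]
    · rw [if_neg (by omega), if_neg h, mul_zero, zero_smul]
  rw [← hδ]
  have hlim := (tendsto_circleIntegral_dampedZpow (b := b) (k := k) hr ha).mono_left
    (nhdsWithin_le_nhds (s := Ioi 0))
  refine ((hlim.const_mul _).smul_const x).congr' ?_
  filter_upwards [self_mem_nhdsWithin] with ε hε
  congr 2
  exact (integral_sectorContour_eq_circleIntegral
    (M := fun s => s ^ (k : ℝ) * Real.exp (-(ε * c) * s ^ b)) hr (by linarith [pi_pos]) hφ2.le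
    (fun z hz harg => differentiableAt_dampedZpow (norm_pos_iff.1 (hr.trans_le hz))
      (by rw [sub_re, ofReal_re]; linarith [hre z harg]))
    (fun z _ harg => norm_dampedZpow_le (by linarith) hε.le hc.le
      (norm_le_norm_sub_of_re_nonpos (by linarith) (hre z harg).le) (hleft z (.inr harg)).1)
    (fun z hz => (differentiableAt_dampedZpow (ne_zero_of_mem_sphere hr.ne' ⟨z, hz⟩)
      (re_sub_pos_of_norm_lt (by rwa [mem_sphere_zero_iff_norm.1 hz]))).continuousAt
        |>.continuousWithinAt)
    (integrableOn_Ioi_rpow_mul_exp_neg_mul_rpow hr hb (mul_pos hε hc) _)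
    (tendsto_mul_rpow_mul_exp_neg_mul_rpow hb (mul_pos hε hc) _)).symm

/-- Contour-integral limit producing the Kronecker delta: with `Γ` the upwards
oriented boundary of `{λ ∈ Σ_φ : |λ| ≥ r}` (two rays `s e^{±iφ}`, `s ≥ r`, and the
arc `r e^{iθ}`, `|θ| ≤ φ`), `φ ∈ (π/2, π)`, `r > 0`, `a > r`, `b > 1`, and
`Re((a−λ)^b) ≥ c|a−λ|^b > 0` on and to the left of `Γ`, one has
`lim_{ε→0+} (1/(2πi)) ∫_Γ e^{−ε(a−λ)^b} λ^{l−1−ω} dλ · x = δ_{ωl} x`. -/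
theorem contour_kronecker_delta_limit {X : Type*} [NormedAddCommGroup X]
    [NormedSpace ℂ X] [CompleteSpace X] (ω l : ℕ) (x : X)
    (φ r a b c : ℝ) (hφ1 : π / 2 < φ) (hφ2 : φ < π) (hr : 0 < r) (ha : r < a)
    (hb : 1 < b) (hc : 0 < c)
    (hleft : ∀ lam : ℂ, (‖lam‖ ≤ r ∨ φ ≤ |Complex.arg lam|) →
      c * ‖(a : ℂ) - lam‖ ^ b ≤ (((a : ℂ) - lam) ^ ((b : ℝ) : ℂ)).re ∧
      0 < c * ‖(a : ℂ) - lam‖ ^ b) :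
    Tendsto (fun ε : ℝ =>
        ((1 / (2 * (π : ℂ) * Complex.I)) *
          ((∫ s in Set.Ioi r,
              (Complex.exp (-(ε : ℂ) * ((a : ℂ) - (s : ℂ) * Complex.exp ((φ : ℂ) * Complex.I)) ^ ((b : ℝ) : ℂ)) *
                 ((s : ℂ) * Complex.exp ((φ : ℂ) * Complex.I)) ^ ((l : ℤ) - 1 - (ω : ℤ)) *
                 Complex.exp ((φ : ℂ) * Complex.I) -
               Complex.exp (-(ε : ℂ) * ((a : ℂ) - (s : ℂ) * Complex.exp (-(φ : ℂ) * Complex.I)) ^ ((b : ℝ) : ℂ)) *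
                 ((s : ℂ) * Complex.exp (-(φ : ℂ) * Complex.I)) ^ ((l : ℤ) - 1 - (ω : ℤ)) *
                 Complex.exp (-(φ : ℂ) * Complex.I))) +
           ∫ θ in (-φ)..φ,
              Complex.exp (-(ε : ℂ) * ((a : ℂ) - (r : ℂ) * Complex.exp ((θ : ℂ) * Complex.I)) ^ ((b : ℝ) : ℂ)) *
                ((r : ℂ) * Complex.exp ((θ : ℂ) * Complex.I)) ^ ((l : ℤ) - 1 - (ω : ℤ)) *
                (Complex.I * (r : ℂ) * Complex.exp ((θ : ℂ) * Complex.I)))) • x)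
      (nhdsWithin 0 (Set.Ioi (0 : ℝ)))
      (nhds (if ω = l then x else 0)) :=
  contour_kronecker_delta_limit_general ω l x φ r a b c hφ1 hφ2 hr ha hb hc hleft
end
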